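/- If S and T are adjacent simple graded subquotients of A^λ, then Ext¹_gr(S, T) ≠ 0. -/

import Mathlib

noncomputable section

/-- A realization of the generalized Weyl algebra `T(R,σ,v)`:
a `ℤ`-graded `ℂ`-algebra `A` containing `R` in degree `0`, with elements
`t₊` of degree `1` and `t₋` of degree `-1` satisfying the GWA relations, such that each
homogeneous component `A_n` is free of rank one as a left `R`-module with basis
`t₊^n` (for `n ≥ 0`) resp. `t₋^{-n}` (for `n ≤ 0`). -/
structure GWA (R : Type) [CommRing R] [Algebra ℂ R] (σ : R ≃ₐ[ℂ] R) (v : R) : Type 1 where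
  A : Type
  [ringA : Ring A]
  [algA : Algebra ℂ A]
  emb : R →ₐ[ℂ] A
  tp : A
  tm : A
  rel1 : ∀ r : R, emb r * tp = tp * emb (σ r)
  rel2 : ∀ r : R, emb (σ r) * tm = tm * emb r
  rel3 : tm * tp = emb (σ v)
  rel4 : tp * tm = emb v
  deg : ℤ → AddSubgroup A
  algmap_mem : ∀ c : ℂ, algebraMap ℂ A c ∈ deg 0
  emb_mem : ∀ r : R, emb r ∈ deg 0
  tp_mem : tp ∈ deg 1
  tm_mem : tm ∈ deg (-1)
  mul_mem : ∀ {i j : ℤ} {a b : A}, a ∈ deg i → b ∈ deg j → a * b ∈ deg (i + j)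
  decomp : ∀ a : A, ∃ (s : Finset ℤ) (g : ℤ → A), (∀ i, g i ∈ deg i) ∧ a = ∑ i ∈ s, g i
  indep : ∀ (s : Finset ℤ) (g : ℤ → A), (∀ i, g i ∈ deg i) → (∑ i ∈ s, g i) = 0 →
    ∀ i ∈ s, g i = 0
  free_pos : ∀ n : ℕ, ∀ a ∈ deg (n : ℤ), ∃! r : R, a = emb r * tp ^ n
  free_neg : ∀ n : ℕ, ∀ a ∈ deg (-(n : ℤ)), ∃! r : R, a = emb r * tm ^ n

attribute [instance] GWA.ringA GWA.algA

variable {R : Type} [CommRing R] [Algebra ℂ R] {σ : R ≃ₐ[ℂ] R} {v : R}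

/-- A `ℤ`-graded left module over (a realization of) a generalized Weyl algebra. -/
structure GradedMod (G : GWA R σ v) : Type 1 where
  M : Type
  [acg : AddCommGroup M]
  [mod : Module G.A M]
  deg : ℤ → AddSubgroup M
  smul_mem : ∀ {i j : ℤ} {a : G.A} {m : M}, a ∈ G.deg i → m ∈ deg j → a • m ∈ deg (i + j)
  decomp : ∀ m : M, ∃ (s : Finset ℤ) (g : ℤ → M), (∀ i, g i ∈ deg i) ∧ m = ∑ i ∈ s, g i
  indep : ∀ (s : Finset ℤ) (g : ℤ → M), (∀ i, g i ∈ deg i) → (∑ i ∈ s, g i) = 0 →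
    ∀ i ∈ s, g i = 0

attribute [instance] GradedMod.acg GradedMod.mod

variable {G : GWA R σ v}

/-- A homomorphism of graded modules that shifts degrees by `n`, i.e. an element of
`Hom_gr(X, Y[n])`. -/
structure GHom (X Y : GradedMod G) (n : ℤ) : Type where
  toLin : X.M →ₗ[G.A] Y.M
  map_deg : ∀ i : ℤ, ∀ m ∈ X.deg i, toLin m ∈ Y.deg (i + n)

/-- `X` is isomorphic to `Y[n]` as a graded module. -/
def GIso (X Y : GradedMod G) (n : ℤ) : Prop :=
  ∃ f : GHom X Y n, Function.Bijective f.toLin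

/-- A submodule is graded if every element of it is a sum of homogeneous elements of it. -/
def IsGradedSub (X : GradedMod G) (N : Submodule G.A X.M) : Prop :=
  ∀ m ∈ N, ∃ (s : Finset ℤ) (g : ℤ → X.M),
    (∀ i, g i ∈ X.deg i) ∧ (∀ i, g i ∈ N) ∧ m = ∑ i ∈ s, g i

/-- `χ_λ = {k ∈ ℤ : σ^k(v) ∈ λ}`. -/
def chiSet (σ : R ≃ₐ[ℂ] R) (v : R) (lam : Ideal R) : Set ℤ := {k : ℤ | (σ ^ k) v ∈ lam}

/-- `X` is (a realization of) the graded module `A^λ = A/Aλ`: it is cyclic, generated by a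
degree-zero element whose annihilator is the left ideal generated by `λ`. -/
def IsStdMod (G : GWA R σ v) (lam : Ideal R) (X : GradedMod G) : Prop :=
  ∃ x ∈ X.deg 0, Submodule.span G.A {x} = ⊤ ∧
    ∀ a : G.A, a • x = 0 ↔ a ∈ Submodule.span G.A (G.emb '' (lam : Set R))

/-- A graded module is simple if it is nonzero and has no proper nontrivial graded submodules. -/
def IsSimpleGr (X : GradedMod G) : Prop :=
  (∃ m : X.M, m ≠ 0) ∧ ∀ N : Submodule G.A X.M, IsGradedSub X N → N = ⊥ ∨ N = ⊤

/-- Artinian graded module : the descending chain condition on graded submodules. -/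
def IsArtinianGr (X : GradedMod G) : Prop :=
  ∀ f : ℕ → Submodule G.A X.M, (∀ n, IsGradedSub X (f n)) →
    (∀ n, f (n + 1) ≤ f n) → ∃ n, ∀ m, n ≤ m → f m = f n

/-- `Y` is a graded subquotient of `X`. -/
def IsSubquotient (X Y : GradedMod G) : Prop :=
  ∃ (Q P : Submodule G.A X.M), IsGradedSub X Q ∧ IsGradedSub X P ∧ P ≤ Q ∧
    ∃ φ : Q →ₗ[G.A] Y.M, Function.Surjective φ ∧
      (∀ q : Q, φ q = 0 ↔ (q : X.M) ∈ P) ∧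
      (∀ (i : ℤ) (q : Q), (q : X.M) ∈ X.deg i → φ q ∈ Y.deg i)

/-- `δ(M) = {i : M_i ≠ 0}`. -/
def deltaSet (X : GradedMod G) : Set ℤ := {i : ℤ | X.deg i ≠ ⊥}

/-- An interval of `ℤ` (possibly unbounded): a convex subset. -/
def IsIntervalZ (s : Set ℤ) : Prop := ∀ a ∈ s, ∀ b ∈ s, ∀ c : ℤ, a ≤ c → c ≤ b → c ∈ s

/-- A graded extension `0 → T → E → S → 0` (all maps degree-preserving). -/
structure GExt1 (S T : GradedMod G) : Type 1 where
  E : GradedMod G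
  f : GHom T E 0
  g : GHom E S 0
  inj : Function.Injective f.toLin
  exact : Function.Exact f.toLin g.toLin
  surj : Function.Surjective g.toLin

/-- A graded extension splits if the surjection admits a graded section. -/
def GExt1.Split {S T : GradedMod G} (e : GExt1 S T) : Prop :=
  ∃ s : GHom S e.E 0, e.g.toLin ∘ₗ s.toLin = LinearMap.id

/-!
Say `δ(S)` lies below `δ(T)` (otherwise reverse the grading), let `b = max δ(S)` and pick
nonzero `s₀ ∈ S_b`, `t₀ ∈ T_{b+1}`; they generate `S` and `T` since these are simple. In `A^λ`,
and hence in its subquotients, the ideal `σ^{-i}(λ)` annihilates degree `i`; as `λ` is maximal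
the annihilator of `s₀` in `R` is exactly `σ^{-b}(λ)`, so `r s₀ = 0` implies `σ⁻¹(r) t₀ = 0`.
This makes `J = {a : a s₀ = 0 and a₊ t₀ = 0}`, where `a₊ t₊` is the part of `a` of positive
degree, a left ideal, and `E = A/J` with generator in degree `b` is an extension
`0 → T → E → S → 0` through `a t₀ ↦ [a t₊]` and `[a] ↦ a s₀`. A graded section would send `s₀`
to some `[r]` with `r ∈ R`: then `(r - 1) s₀ = 0`, while `t₊ r = σ⁻¹(r) t₊ ∈ J` gives
`σ⁻¹(r) t₀ = 0`, so `t₀ = 0`.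
-/

open DirectSum

section Decomposition

variable {ι M : Type*} [DecidableEq ι] [AddCommGroup M] (ℳ : ι → AddSubgroup M)

theorem DirectSum.isInternal_of_exists_sum
    (decomp : ∀ m : M, ∃ (s : Finset ι) (g : ι → M), (∀ i, g i ∈ ℳ i) ∧ m = ∑ i ∈ s, g i)
    (indep : ∀ (s : Finset ι) (g : ι → M), (∀ i, g i ∈ ℳ i) → ∑ i ∈ s, g i = 0 →
      ∀ i ∈ s, g i = 0) :
    IsInternal ℳ := by
  classical
  refine ⟨(injective_iff_map_eq_zero _).2 fun x hx => ?_, fun m => ?_⟩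
  · ext i
    by_cases hi : i ∈ x.support
    · refine indep x.support (fun i => x i) (fun i => (x i).2) ?_ i hi
      rw [← hx, coeAddMonoidHom_eq_dfinsuppSum]
      rfl
    · simpa using hi
  · obtain ⟨s, g, hg, rfl⟩ := decomp m
    exact ⟨∑ i ∈ s, of (fun i => ℳ i) i ⟨g i, hg i⟩, by simp⟩

variable [Decomposition ℳ]

theorem DirectSum.coe_decompose_sum_of_mem {s : Finset ι} {g : ι → M}
    (hg : ∀ i ∈ s, g i ∈ ℳ i) (i : ι) :
    (decompose ℳ (∑ j ∈ s, g j) i : M) = if i ∈ s then g i else 0 := by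
  rw [decompose_sum, DFinsupp.finsetSum_apply, AddSubgroup.val_finsetSum]
  split_ifs with hi
  · rw [Finset.sum_eq_single i (fun j hj hji => decompose_of_mem_ne ℳ (hg j hj) hji)
      (fun h => (h hi).elim), decompose_of_mem_same ℳ (hg i hi)]
  · exact Finset.sum_eq_zero fun j hj =>
      decompose_of_mem_ne ℳ (hg j hj) (fun h => hi (h ▸ hj))

end Decomposition

section Reindex

variable {ι ι' M : Type*} [AddCommMonoid M] (e : ι' ≃ ι) {p : ι → M → Prop}

theorem exists_sum_reindex {m : M}
    (h : ∃ (s : Finset ι) (g : ι → M), (∀ i, p i (g i)) ∧ m = ∑ i ∈ s, g i) :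
    ∃ (s : Finset ι') (g : ι' → M), (∀ i, p (e i) (g i)) ∧ m = ∑ i ∈ s, g i := by
  obtain ⟨s, g, hg, rfl⟩ := h
  exact ⟨s.map e.symm.toEmbedding, fun i => g (e i), fun i => hg (e i), by simp⟩

theorem forall_eq_zero_reindex
    (h : ∀ (s : Finset ι) (g : ι → M), (∀ i, p i (g i)) → ∑ i ∈ s, g i = 0 → ∀ i ∈ s, g i = 0)
    (s : Finset ι') (g : ι' → M) (hg : ∀ i, p (e i) (g i)) (hs : ∑ i ∈ s, g i = 0) :
    ∀ i ∈ s, g i = 0 := by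
  intro i hi
  simpa using h (s.map e.toEmbedding) (fun j => g (e.symm j))
    (fun j => by simpa using hg (e.symm j)) (by simpa using hs) (e i) (Finset.mem_map_of_mem _ hi)

end Reindex

namespace GWA

instance : SetLike.GradedMonoid G.deg where
  one_mem := by simpa using G.algmap_mem 1
  mul_mem _ _ _ _ := G.mul_mem

noncomputable instance : GradedRing G.deg :=
  { (isInternal_of_exists_sum G.deg G.decomp G.indep).chooseDecomposition with }

abbrev proj (i : ℤ) : G.A →+ G.A := GradedRing.proj G.deg i

theorem proj_mem (a : G.A) (i : ℤ) : G.proj i a ∈ G.deg i := by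
  rw [GradedRing.proj_apply]
  exact (decompose G.deg a i).2

theorem proj_of_mem {k : ℤ} {a : G.A} (ha : a ∈ G.deg k) (i : ℤ) :
    G.proj i a = if k = i then a else 0 := by
  rw [GradedRing.proj_apply]
  split_ifs with h
  · exact h ▸ decompose_of_mem_same _ ha
  · exact decompose_of_mem_ne _ ha h

theorem exists_sum_proj (a : G.A) : ∃ s : Finset ℤ, a = ∑ i ∈ s, G.proj i a := by
  classical
  exact ⟨_, by simpa [GradedRing.proj_apply] using (sum_support_decompose G.deg a).symm⟩

theorem tp_pow_mem (n : ℕ) : G.tp ^ n ∈ G.deg n := by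
  simpa using SetLike.pow_mem_graded n G.tp_mem

theorem exists_eq_emb {a : G.A} (ha : a ∈ G.deg 0) : ∃ r, a = G.emb r := by
  obtain ⟨r, hr, -⟩ := G.free_pos 0 a ha
  exact ⟨r, by simpa using hr⟩

theorem exists_eq_mul_tp_pow {n : ℤ} (hn : 0 ≤ n) (m : ℕ) {a : G.A} (ha : a ∈ G.deg (n + m)) :
    ∃ y ∈ G.deg n, a = y * G.tp ^ m := by
  lift n to ℕ using hn
  obtain ⟨r, rfl, -⟩ := G.free_pos (n + m) a (by exact_mod_cast ha)
  have hy := G.mul_mem (G.emb_mem r) (G.tp_pow_mem n)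
  rw [zero_add] at hy
  exact ⟨G.emb r * G.tp ^ n, hy, by rw [pow_add, mul_assoc]⟩

theorem exists_eq_mul_tp {n : ℤ} (hn : 0 ≤ n) {a : G.A} (ha : a ∈ G.deg (n + 1)) :
    ∃ d ∈ G.deg n, a = d * G.tp := by
  simpa using G.exists_eq_mul_tp_pow hn 1 (by simpa using ha)

theorem proj_mul_tp (a : G.A) (n : ℤ) : G.proj (n + 1) (a * G.tp) = G.proj n a * G.tp := by
  simp only [proj, GradedRing.proj_apply]
  exact coe_decompose_mul_add_of_right_mem G.deg G.tp_mem

theorem eq_zero_of_mul_tp_eq_zero {n : ℤ} (hn : 0 ≤ n) {d : G.A} (hd : d ∈ G.deg n)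
    (h : d * G.tp = 0) : d = 0 := by
  lift n to ℕ using hn
  obtain ⟨r, rfl, -⟩ := G.free_pos n d hd
  obtain ⟨r', -, huniq⟩ := G.free_pos (n + 1) 0 (zero_mem _)
  have hr : r = 0 := (huniq r (by simp only [pow_succ, ← mul_assoc, h])).trans
    (huniq 0 (by simp)).symm
  simp [hr]

theorem mul_tp_cancel {n : ℤ} (hn : 0 ≤ n) {d d' : G.A} (hd : d ∈ G.deg n) (hd' : d' ∈ G.deg n)
    (h : d * G.tp = d' * G.tp) : d = d' :=
  sub_eq_zero.1 <| G.eq_zero_of_mul_tp_eq_zero hn (sub_mem hd hd') (by rw [sub_mul, h, sub_self])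

theorem emb_mul_tp_pow (u : R) (n : ℕ) : G.emb u * G.tp ^ n = G.tp ^ n * G.emb ((σ ^ n) u) := by
  induction n generalizing u with
  | zero => simp
  | succ n ih =>
    rw [pow_succ', ← mul_assoc, G.rel1, mul_assoc, ih, ← mul_assoc, pow_succ σ, AlgEquiv.mul_apply]

theorem emb_mul_tm_pow (u : R) (n : ℕ) : G.emb u * G.tm ^ n = G.tm ^ n * G.emb ((σ⁻¹ ^ n) u) := by
  induction n generalizing u with
  | zero => simp
  | succ n ih =>
    have h := G.rel2 (σ⁻¹ u)
    rw [← AlgEquiv.mul_apply, mul_inv_cancel, AlgEquiv.one_apply] at h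
    rw [pow_succ', ← mul_assoc, h, mul_assoc, ih, ← mul_assoc, pow_succ σ⁻¹, AlgEquiv.mul_apply]

theorem emb_mul_of_mem {i : ℤ} {a : G.A} (ha : a ∈ G.deg i) (u : R) :
    G.emb u * a = a * G.emb ((σ ^ i) u) := by
  obtain ⟨n, rfl | rfl⟩ := i.eq_nat_or_neg
  · obtain ⟨r, rfl, -⟩ := G.free_pos n a ha
    rw [← mul_assoc, ← map_mul, mul_comm, map_mul, mul_assoc, emb_mul_tp_pow, mul_assoc,
      zpow_natCast]
  · obtain ⟨r, rfl, -⟩ := G.free_neg n a ha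
    rw [← mul_assoc, ← map_mul, mul_comm, map_mul, mul_assoc, emb_mul_tm_pow, mul_assoc,
      zpow_neg, zpow_natCast, inv_pow]

end GWA

namespace GradedMod

variable (Y : GradedMod G)

noncomputable instance : Decomposition Y.deg :=
  (isInternal_of_exists_sum Y.deg Y.decomp Y.indep).chooseDecomposition

variable {Y}

theorem coe_decompose_smul_of_mem {i : ℤ} {m : Y.M} (hm : m ∈ Y.deg i) (a : G.A) (j : ℤ) :
    (decompose Y.deg (a • m) (j + i) : Y.M) = G.proj j a • m := by
  induction a using Decomposition.inductionOn G.deg with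
  | zero => simp
  | @homogeneous k a =>
    have ham := Y.smul_mem a.2 hm
    rw [GradedRing.proj_apply]
    by_cases hkj : k = j
    · subst hkj
      rw [decompose_of_mem_same _ ham, decompose_of_mem_same _ a.2]
    · rw [decompose_of_mem_ne _ ham (by omega), decompose_of_mem_ne _ a.2 hkj, zero_smul]
  | add a a' ha ha' => simp [add_smul, ha, ha']

theorem smul_eq_proj_smul_of_mem {i j : ℤ} {m : Y.M} {a : G.A} (hm : m ∈ Y.deg i)
    (ham : a • m ∈ Y.deg j) : a • m = G.proj (j - i) a • m := by
  rw [← coe_decompose_smul_of_mem hm, sub_add_cancel, decompose_of_mem_same _ ham]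

theorem proj_smul_eq_zero_of_smul_eq_zero {i : ℤ} {m : Y.M} {a : G.A} (hm : m ∈ Y.deg i)
    (h : a • m = 0) (j : ℤ) : G.proj j a • m = 0 := by
  rw [← coe_decompose_smul_of_mem hm, h, decompose_zero]
  rfl

theorem mem_deltaSet_iff {i : ℤ} : i ∈ deltaSet Y ↔ ∃ m ∈ Y.deg i, m ≠ 0 := by
  simp [deltaSet, AddSubgroup.ne_bot_iff_exists_ne_zero]

theorem isGradedSub_of_decompose_mem {N : Submodule G.A Y.M}
    (h : ∀ m ∈ N, ∀ i, (decompose Y.deg m i : Y.M) ∈ N) : IsGradedSub Y N := by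
  classical
  intro m hm
  exact ⟨(decompose Y.deg m).support, fun i => decompose Y.deg m i, fun i => (decompose _ m i).2,
    fun i => h m hm i, (sum_support_decompose Y.deg m).symm⟩

theorem decompose_mem_of_isGradedSub {N : Submodule G.A Y.M} (hN : IsGradedSub Y N) {m : Y.M}
    (hm : m ∈ N) (i : ℤ) : (decompose Y.deg m i : Y.M) ∈ N := by
  obtain ⟨s, g, hg, hgN, rfl⟩ := hN m hm
  rw [coe_decompose_sum_of_mem _ (fun i _ => hg i)]
  split_ifs
  exacts [hgN i, zero_mem _]

end GradedMod

open GradedMod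

def GWA.self (G : GWA R σ v) : GradedMod G where
  M := G.A
  deg := G.deg
  smul_mem := G.mul_mem
  decomp := G.decomp
  indep := G.indep

namespace GradedMod

variable (Y : GradedMod G)

def quotient (N : Submodule G.A Y.M) (hN : IsGradedSub Y N) : GradedMod G where
  M := Y.M ⧸ N
  deg i := (Y.deg i).map N.mkQ.toAddMonoidHom
  smul_mem := by
    rintro i j a - ha ⟨y, hy, rfl⟩
    exact ⟨a • y, Y.smul_mem ha hy, N.mkQ.map_smul a y⟩
  decomp m := by
    obtain ⟨y, rfl⟩ := N.mkQ_surjective m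
    obtain ⟨s, g, hg, rfl⟩ := Y.decomp y
    exact ⟨s, fun i => N.mkQ (g i), fun i => ⟨g i, hg i, rfl⟩, map_sum _ _ _⟩
  indep s g hg hsum i hi := by
    choose c hc hcg using hg
    have hcN : ∑ j ∈ s, c j ∈ N := by
      rw [← Submodule.Quotient.mk_eq_zero, ← N.mkQ_apply, map_sum, ← hsum]
      exact Finset.sum_congr rfl fun j _ => hcg j
    have hciN := decompose_mem_of_isGradedSub hN hcN i
    rw [coe_decompose_sum_of_mem _ fun j _ => hc j, if_pos hi] at hciN
    rw [← hcg i]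
    exact (Submodule.Quotient.mk_eq_zero N).2 hciN

def shift (b : ℤ) : GradedMod G where
  M := Y.M
  deg i := Y.deg (i - b)
  smul_mem ha hm := by
    rw [add_sub_assoc]
    exact Y.smul_mem ha hm
  decomp m := exists_sum_reindex (Equiv.subRight b) (Y.decomp m)
  indep := forall_eq_zero_reindex (Equiv.subRight b) Y.indep

end GradedMod

namespace IsSimpleGr

variable {Y : GradedMod G}

theorem exists_smul_eq (hY : IsSimpleGr Y) {i : ℤ} {m₀ : Y.M} (hm₀ : m₀ ∈ Y.deg i)
    (hm₀0 : m₀ ≠ 0) (m : Y.M) : ∃ a : G.A, a • m₀ = m := by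
  have hspan : IsGradedSub Y (Submodule.span G.A {m₀}) := by
    refine isGradedSub_of_decompose_mem fun n hn j => ?_
    obtain ⟨a, rfl⟩ := Submodule.mem_span_singleton.1 hn
    rw [← sub_add_cancel j i, coe_decompose_smul_of_mem hm₀]
    exact Submodule.mem_span_singleton.2 ⟨_, rfl⟩
  rcases hY.2 _ hspan with h | h
  · exact absurd (h ▸ Submodule.mem_span_singleton_self m₀ : m₀ ∈ (⊥ : Submodule G.A Y.M)) hm₀0
  · exact Submodule.mem_span_singleton.1 (h ▸ Submodule.mem_top)

theorem isIntervalZ (hY : IsSimpleGr Y) : IsIntervalZ (deltaSet Y) := by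
  intro a ha b hb c hac hcb
  by_contra hc
  obtain ⟨ma, hma, hma0⟩ := mem_deltaSet_iff.1 ha
  obtain ⟨mb, hmb, hmb0⟩ := mem_deltaSet_iff.1 hb
  obtain ⟨x, rfl⟩ := hY.exists_smul_eq hma hma0 mb
  obtain ⟨y, -, hy⟩ := G.exists_eq_mul_tp_pow (sub_nonneg.2 hcb) (c - a).toNat
    (show G.proj (b - a) x ∈ G.deg (b - c + (c - a).toNat) by
      convert G.proj_mem x (b - a) using 2; omega)
  have hgap : G.tp ^ (c - a).toNat • ma = 0 := by
    have h := Y.smul_mem (G.tp_pow_mem (c - a).toNat) hma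
    rwa [show ((c - a).toNat : ℤ) + a = c by omega, not_not.1 hc, AddSubgroup.mem_bot] at h
  exact hmb0 (by rw [smul_eq_proj_smul_of_mem hma hmb, hy, mul_smul, hgap, smul_zero])

theorem deltaSet_nonempty (hY : IsSimpleGr Y) : (deltaSet Y).Nonempty := by
  obtain ⟨m, hm⟩ := hY.1
  by_contra h
  obtain ⟨s, g, hg, rfl⟩ := Y.decomp m
  refine hm (Finset.sum_eq_zero fun i _ => ?_)
  have := hg i
  rwa [show Y.deg i = ⊥ from not_not.1 fun hi => h ⟨i, hi⟩, AddSubgroup.mem_bot] at this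

end IsSimpleGr

def AnnihilatedByShifts (lam : Ideal R) (Y : GradedMod G) : Prop :=
  ∀ (i : ℤ) (u : R), (σ ^ i) u ∈ lam → ∀ m ∈ Y.deg i, G.emb u • m = 0

theorem IsStdMod.annihilatedByShifts {lam : Ideal R} {X : GradedMod G} (hX : IsStdMod G lam X) :
    AnnihilatedByShifts lam X := by
  obtain ⟨x, hx, hspan, hann⟩ := hX
  intro i u hu m hm
  obtain ⟨a, rfl⟩ := Submodule.mem_span_singleton.1 (hspan ▸ Submodule.mem_top : m ∈ _)
  rw [smul_eq_proj_smul_of_mem hx hm, sub_zero, smul_smul, G.emb_mul_of_mem (G.proj_mem a i),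
    mul_smul, (hann _).2 (Submodule.subset_span ⟨_, hu, rfl⟩), smul_zero]

theorem IsSubquotient.annihilatedByShifts {lam : Ideal R} {X Y : GradedMod G}
    (h : IsSubquotient X Y) (hX : AnnihilatedByShifts lam X) : AnnihilatedByShifts lam Y := by
  obtain ⟨Q, -, hQ, -, -, φ, hφ, -, hφdeg⟩ := h
  intro i u hu m hm
  obtain ⟨q, rfl⟩ := hφ m
  obtain ⟨s, g, hg, hgQ, hq⟩ := hQ q q.2
  have hφq : φ q = ∑ j ∈ s, φ ⟨g j, hgQ j⟩ := by
    rw [← map_sum]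
    exact congrArg φ (Subtype.ext (by simpa using hq))
  rw [← decompose_of_mem_same Y.deg hm, hφq,
    coe_decompose_sum_of_mem _ fun j _ => hφdeg j _ (hg j)]
  split_ifs
  · rw [← map_smul]
    exact (congrArg φ (Subtype.ext (hX i u hu _ (hg i)))).trans (map_zero φ)
  · exact smul_zero _

theorem AnnihilatedByShifts.mem_of_smul_eq_zero {lam : Ideal R} {Y : GradedMod G}
    (hY : AnnihilatedByShifts lam Y) (hlam : lam.IsMaximal) {i : ℤ} {m : Y.M} (hm : m ∈ Y.deg i)
    (hm0 : m ≠ 0) {r : R} (h : G.emb r • m = 0) : (σ ^ i) r ∈ lam := by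
  by_contra hr
  obtain ⟨y, l, hl, hyl⟩ := hlam.exists_inv hr
  have hone : (σ ^ i).symm y * r + (σ ^ i).symm l = 1 :=
    (σ ^ i).injective (by simpa using hyl)
  apply hm0
  calc m = G.emb ((σ ^ i).symm y * r + (σ ^ i).symm l) • m := by rw [hone, map_one, one_smul]
    _ = 0 := by
      rw [map_add, add_smul, map_mul, mul_smul, h, smul_zero, zero_add,
        hY i _ (by simpa using hl) m hm]

structure ExtensionData (S T : GradedMod G) where
  b : ℤ
  s₀ : S.M
  t₀ : T.M
  s₀_mem : s₀ ∈ S.deg b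
  t₀_mem : t₀ ∈ T.deg (b + 1)
  t₀_ne_zero : t₀ ≠ 0
  tp_smul_s₀ : G.tp • s₀ = 0
  deg_eq_bot_of_le : ∀ j ≤ b, T.deg j = ⊥
  emb_symm_smul_t₀ : ∀ r : R, G.emb r • s₀ = 0 → G.emb (σ.symm r) • t₀ = 0
  exists_smul_s₀ : ∀ m : S.M, ∃ a : G.A, a • s₀ = m
  exists_smul_t₀ : ∀ m : T.M, ∃ a : G.A, a • t₀ = m

namespace ExtensionData

variable {S T : GradedMod G} (K : ExtensionData S T)

/-- The extension is `A e` for a generator `e` of degree `b` mapping to `s₀` with `t₊ e = t₀`;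
`Kills a` says `a e = 0`. -/
def Kills (a : G.A) : Prop :=
  a • K.s₀ = 0 ∧ ∀ n : ℤ, 0 ≤ n → ∀ d ∈ G.deg n, d * G.tp = G.proj (n + 1) a → d • K.t₀ = 0

theorem kills_zero : K.Kills 0 :=
  ⟨zero_smul _ _, fun n hn d hd h => by
    rw [G.eq_zero_of_mul_tp_eq_zero hn hd (by simpa using h), zero_smul]⟩

variable {K}

theorem Kills.add {a a' : G.A} (ha : K.Kills a) (ha' : K.Kills a') : K.Kills (a + a') := by
  refine ⟨by rw [add_smul, ha.1, ha'.1, add_zero], fun n hn d hd h => ?_⟩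
  obtain ⟨d₁, hd₁, h₁⟩ := G.exists_eq_mul_tp hn (G.proj_mem a (n + 1))
  have h₂ : (d - d₁) * G.tp = G.proj (n + 1) a' := by
    rw [sub_mul, h, map_add, h₁, add_sub_cancel_left]
  rw [← sub_add_cancel d d₁, add_smul, ha'.2 n hn _ (sub_mem hd hd₁) h₂,
    ha.2 n hn d₁ hd₁ h₁.symm, zero_add]

theorem kills_sum {s : Finset ℤ} {f : ℤ → G.A} (h : ∀ i ∈ s, K.Kills (f i)) :
    K.Kills (∑ i ∈ s, f i) :=
  Finset.sum_induction _ K.Kills (fun _ _ => Kills.add) K.kills_zero h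

theorem kills_of_mem_of_nonpos {k : ℤ} (hk : k ≤ 0) {c : G.A} (hc : c ∈ G.deg k)
    (hcs : c • K.s₀ = 0) : K.Kills c := by
  refine ⟨hcs, fun n hn d hd h => ?_⟩
  rw [G.proj_of_mem hc, if_neg (by omega)] at h
  rw [G.eq_zero_of_mul_tp_eq_zero hn hd h, zero_smul]

theorem Kills.proj {a : G.A} (ha : K.Kills a) (k : ℤ) : K.Kills (G.proj k a) := by
  refine ⟨proj_smul_eq_zero_of_smul_eq_zero K.s₀_mem ha.1 k, fun n hn d hd h => ?_⟩
  rw [G.proj_of_mem (G.proj_mem a k)] at h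
  split_ifs at h with hk
  · exact ha.2 n hn d hd (hk ▸ h)
  · rw [G.eq_zero_of_mul_tp_eq_zero hn hd h, zero_smul]

theorem Kills.mul_of_mem {j k : ℤ} {x c : G.A} (hx : x ∈ G.deg j) (hc : c ∈ G.deg k)
    (hcK : K.Kills c) : K.Kills (x * c) := by
  refine ⟨by rw [mul_smul, hcK.1, smul_zero], fun n hn d hd h => ?_⟩
  rw [G.proj_of_mem (G.mul_mem hx hc)] at h
  split_ifs at h with hjk
  swap
  · rw [G.eq_zero_of_mul_tp_eq_zero hn hd h, zero_smul]
  rcases lt_or_ge 0 k with hk | hk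
  · obtain ⟨d₀, hd₀, rfl⟩ := G.exists_eq_mul_tp (by omega : 0 ≤ k - 1)
      (by rwa [sub_add_cancel] : c ∈ G.deg (k - 1 + 1))
    have hd₀t : d₀ • K.t₀ = 0 := hcK.2 (k - 1) (by omega) d₀ hd₀
      (by rw [sub_add_cancel, G.proj_of_mem hc, if_pos rfl])
    have hdx : d = x * d₀ := G.mul_tp_cancel hn hd
      (by convert G.mul_mem hx hd₀ using 2; omega) (by rw [h, mul_assoc])
    rw [hdx, mul_smul, hd₀t, smul_zero]
  · -- `x = y t₊^{q+1}` and `t₊^q c ∈ A_0 = R`, so `x c = y t₊ r₀ = y σ⁻¹(r₀) t₊`.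
    obtain ⟨q, rfl⟩ : ∃ q : ℕ, k = -q := ⟨(-k).toNat, by omega⟩
    obtain ⟨y, hy, rfl⟩ := G.exists_eq_mul_tp_pow hn (q + 1)
      (by convert hx using 2; push_cast; omega)
    obtain ⟨r₀, hr₀⟩ := G.exists_eq_emb
      (by simpa using G.mul_mem (G.tp_pow_mem q) hc : G.tp ^ q * c ∈ G.deg 0)
    have hr₀s : G.emb r₀ • K.s₀ = 0 := by rw [← hr₀, mul_smul, hcK.1, smul_zero]
    have hdy : d = y * G.emb (σ.symm r₀) := by
      refine G.mul_tp_cancel hn hd (by simpa using G.mul_mem hy (G.emb_mem (σ.symm r₀))) ?_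
      have h1 := G.rel1 (σ.symm r₀)
      rw [AlgEquiv.apply_symm_apply] at h1
      rw [h, pow_succ', mul_assoc, mul_assoc, hr₀, ← h1, mul_assoc]
    rw [hdy, mul_smul, K.emb_symm_smul_t₀ r₀ hr₀s, smul_zero]

theorem Kills.mul {a : G.A} (ha : K.Kills a) (x : G.A) : K.Kills (x * a) := by
  obtain ⟨s, hs⟩ := G.exists_sum_proj x
  obtain ⟨t, ht⟩ := G.exists_sum_proj a
  rw [hs, ht, Finset.sum_mul_sum]
  exact kills_sum fun j _ => kills_sum fun k _ =>
    (ha.proj k).mul_of_mem (G.proj_mem x j) (G.proj_mem a k)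

variable (K)

def ann : Submodule G.A G.A where
  carrier := {a | K.Kills a}
  add_mem' := Kills.add
  zero_mem' := K.kills_zero
  smul_mem' x _ ha := ha.mul x

theorem isGradedSub_ann : IsGradedSub (GWA.self G) K.ann := by
  intro a ha
  obtain ⟨s, hs⟩ := G.exists_sum_proj a
  exact ⟨s, fun i => G.proj i a, G.proj_mem a, fun i => Kills.proj ha i, hs⟩

def E : GradedMod G := ((GWA.self G).quotient K.ann K.isGradedSub_ann).shift K.b

def mkQ : G.A →ₗ[G.A] K.E.M := K.ann.mkQ

theorem mkQ_surjective : Function.Surjective K.mkQ := K.ann.mkQ_surjective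

theorem mkQ_eq_zero {a : G.A} : K.mkQ a = 0 ↔ a ∈ K.ann := Submodule.Quotient.mk_eq_zero K.ann

theorem mem_deg_E {m : K.E.M} {i : ℤ} : m ∈ K.E.deg i ↔ ∃ c ∈ G.deg (i - K.b), K.mkQ c = m :=
  AddSubgroup.mem_map

def toS : GHom K.E S 0 where
  toLin := K.ann.liftQ (LinearMap.toSpanSingleton G.A S.M K.s₀) fun _ ha => ha.1
  map_deg i m hm := by
    obtain ⟨c, hc, rfl⟩ := K.mem_deg_E.1 hm
    show c • K.s₀ ∈ S.deg (i + 0)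
    simpa using S.smul_mem hc K.s₀_mem

theorem toS_mkQ (c : G.A) : K.toS.toLin (K.mkQ c) = c • K.s₀ := rfl

theorem mul_tp_mem_ann {a : G.A} (h : a • K.t₀ = 0) : a * G.tp ∈ K.ann := by
  refine ⟨by rw [mul_smul, K.tp_smul_s₀, smul_zero], fun n hn d hd hdn => ?_⟩
  rw [G.proj_mul_tp] at hdn
  rw [G.mul_tp_cancel hn hd (G.proj_mem a n) hdn]
  exact proj_smul_eq_zero_of_smul_eq_zero K.t₀_mem h n

theorem surjective_toSpanSingleton_t₀ :
    Function.Surjective (LinearMap.toSpanSingleton G.A T.M K.t₀) :=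
  K.exists_smul_t₀

/-- `a t₀ ↦ [a t₊]`, well defined since `T ≅ A / Ann(t₀)`. -/
def ofTLin : T.M →ₗ[G.A] K.E.M :=
  (LinearMap.ker (LinearMap.toSpanSingleton G.A T.M K.t₀)).liftQ
      (K.mkQ ∘ₗ LinearMap.toSpanSingleton G.A G.A G.tp)
      (fun _ ha => K.mkQ_eq_zero.2 (K.mul_tp_mem_ann ha)) ∘ₗ
    ((LinearMap.toSpanSingleton G.A T.M K.t₀).quotKerEquivOfSurjective
      K.surjective_toSpanSingleton_t₀).symm.toLinearMap

theorem ofTLin_smul (a : G.A) : K.ofTLin (a • K.t₀) = K.mkQ (a * G.tp) := by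
  have h := LinearMap.quotKerEquivOfSurjective_symm_apply _ K.surjective_toSpanSingleton_t₀ a
  rw [LinearMap.toSpanSingleton_apply] at h
  simp only [ofTLin, LinearMap.coe_comp, Function.comp_apply, LinearEquiv.coe_coe, h]
  rfl

def ofT : GHom T K.E 0 where
  toLin := K.ofTLin
  map_deg i m hm := by
    obtain ⟨a, rfl⟩ := K.exists_smul_t₀ m
    rw [smul_eq_proj_smul_of_mem K.t₀_mem hm, ofTLin_smul]
    refine K.mem_deg_E.2 ⟨_, ?_, rfl⟩
    convert G.mul_mem (G.proj_mem a _) G.tp_mem using 2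
    omega

theorem ofT_smul (a : G.A) : K.ofT.toLin (a • K.t₀) = K.mkQ (a * G.tp) :=
  K.ofTLin_smul a

theorem ofT_injective : Function.Injective K.ofT.toLin := by
  refine (injective_iff_map_eq_zero _).2 fun m hm => ?_
  obtain ⟨a, rfl⟩ := K.exists_smul_t₀ m
  rw [K.ofT_smul, mkQ_eq_zero] at hm
  have hproj : ∀ n, G.proj n a • K.t₀ = 0 := by
    intro n
    rcases le_or_gt 0 n with hn | hn
    · exact hm.2 n hn _ (G.proj_mem a n) (G.proj_mul_tp a n).symm
    · have h := T.smul_mem (G.proj_mem a n) K.t₀_mem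
      rwa [K.deg_eq_bot_of_le _ (by omega), AddSubgroup.mem_bot] at h
  obtain ⟨s, hs⟩ := G.exists_sum_proj a
  rw [hs, Finset.sum_smul]
  exact Finset.sum_eq_zero fun n _ => hproj n

theorem exact_ofT_toS : Function.Exact K.ofT.toLin K.toS.toLin := by
  intro m
  obtain ⟨c, rfl⟩ := K.mkQ_surjective m
  constructor
  · intro hc
    rw [toS_mkQ] at hc
    obtain ⟨s, hs⟩ := G.exists_sum_proj c
    rw [hs, map_sum]
    refine Submodule.sum_mem (LinearMap.range K.ofT.toLin) fun k _ => ?_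
    rcases lt_or_ge 0 k with hk | hk
    · obtain ⟨d, -, hd⟩ := G.exists_eq_mul_tp (by omega : 0 ≤ k - 1)
        (by rw [sub_add_cancel]; exact G.proj_mem c k)
      exact ⟨d • K.t₀, by rw [ofT_smul, ← hd]⟩
    · refine ⟨0, (map_zero _).trans (K.mkQ_eq_zero.2 ?_).symm⟩
      exact kills_of_mem_of_nonpos hk (G.proj_mem c k)
        (proj_smul_eq_zero_of_smul_eq_zero K.s₀_mem hc k)
  · rintro ⟨t, ht⟩
    obtain ⟨a, rfl⟩ := K.exists_smul_t₀ t
    rw [← ht, ofT_smul, toS_mkQ, mul_smul, K.tp_smul_s₀, smul_zero]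

def extension : GExt1 S T where
  E := K.E
  f := K.ofT
  g := K.toS
  inj := K.ofT_injective
  exact := K.exact_ofT_toS
  surj m := by
    obtain ⟨a, rfl⟩ := K.exists_smul_s₀ m
    exact ⟨K.mkQ a, rfl⟩

theorem extension_not_split : ¬ K.extension.Split := by
  change ¬ ∃ sec : GHom S K.E 0, K.toS.toLin ∘ₗ sec.toLin = LinearMap.id
  rintro ⟨sec, hsec⟩
  obtain ⟨c, hc, hcs⟩ := K.mem_deg_E.1 (sec.map_deg K.b K.s₀ K.s₀_mem)
  obtain ⟨r, rfl⟩ := G.exists_eq_emb (by simpa using hc)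
  have hr : G.emb r • K.s₀ = K.s₀ := by
    rw [← toS_mkQ, hcs]
    exact LinearMap.congr_fun hsec K.s₀
  have hann : G.emb (σ.symm r) * G.tp ∈ K.ann := by
    have h1 := G.rel1 (σ.symm r)
    rw [AlgEquiv.apply_symm_apply] at h1
    rw [h1, ← mkQ_eq_zero, ← smul_eq_mul, map_smul, hcs, ← map_smul, K.tp_smul_s₀, map_zero]
  have hdeg : G.emb (σ.symm r) * G.tp ∈ G.deg 1 := by
    simpa using G.mul_mem (G.emb_mem (σ.symm r)) G.tp_mem
  have h0 : G.emb (σ.symm r) • K.t₀ = 0 :=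
    hann.2 0 le_rfl _ (G.emb_mem _) (by rw [zero_add, G.proj_of_mem hdeg, if_pos rfl])
  have h1 := K.emb_symm_smul_t₀ (r - 1) (by rw [map_sub, map_one, sub_smul, one_smul, hr, sub_self])
  rw [map_sub, map_one, map_sub, map_one, sub_smul, one_smul, h0, zero_sub, neg_eq_zero] at h1
  exact K.t₀_ne_zero h1

end ExtensionData

theorem exists_not_split_of_forall_lt {lam : Ideal R} (hlam : lam.IsMaximal) {S T : GradedMod G}
    (hSa : AnnihilatedByShifts lam S) (hTa : AnnihilatedByShifts lam T) (hS : IsSimpleGr S)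
    (hT : IsSimpleGr T) (hadj : IsIntervalZ (deltaSet S ∪ deltaSet T))
    (hlt : ∀ s ∈ deltaSet S, ∀ t ∈ deltaSet T, s < t) :
    ∃ e : GExt1 S T, ¬ e.Split := by
  classical
  obtain ⟨iS, hiS⟩ := hS.deltaSet_nonempty
  obtain ⟨iT, hiT⟩ := hT.deltaSet_nonempty
  obtain ⟨b, hb, hbmax⟩ := Int.exists_greatest_of_bdd ⟨iT, fun s hs => (hlt s hs iT hiT).le⟩
    ⟨iS, hiS⟩
  have hb1 : b + 1 ∈ deltaSet T := by
    rcases hadj iS (.inl hiS) iT (.inr hiT) (b + 1) (by linarith [hbmax iS hiS])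
      (by linarith [hlt b hb iT hiT]) with h | h
    · linarith [hbmax _ h]
    · exact h
  obtain ⟨s₀, hs₀, hs₀0⟩ := mem_deltaSet_iff.1 hb
  obtain ⟨t₀, ht₀, ht₀0⟩ := mem_deltaSet_iff.1 hb1
  let K : ExtensionData S T :=
    { b, s₀, t₀
      s₀_mem := hs₀
      t₀_mem := ht₀
      t₀_ne_zero := ht₀0
      tp_smul_s₀ := by
        have h := S.smul_mem G.tp_mem hs₀
        rwa [show S.deg (1 + b) = ⊥ from not_not.1 fun h => by linarith [hbmax _ h],
          AddSubgroup.mem_bot] at h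
      deg_eq_bot_of_le := fun j hj => not_not.1 fun h => by linarith [hlt b hb j h]
      emb_symm_smul_t₀ := fun r hr => hTa (b + 1) (σ.symm r)
        (by simpa [zpow_add_one] using hSa.mem_of_smul_eq_zero hlam hs₀ hs₀0 hr) t₀ ht₀
      exists_smul_s₀ := hS.exists_smul_eq hs₀ hs₀0
      exists_smul_t₀ := hT.exists_smul_eq ht₀ ht₀0 }
  exact ⟨K.extension, K.extension_not_split⟩

def GWA.flip (G : GWA R σ v) : GWA R σ.symm (σ v) where
  A := G.A
  emb := G.emb
  tp := G.tm
  tm := G.tp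
  rel1 r := by simpa using G.rel2 (σ.symm r)
  rel2 r := by simpa using G.rel1 (σ.symm r)
  rel3 := by simpa using G.rel4
  rel4 := G.rel3
  deg n := G.deg (-n)
  algmap_mem c := by simpa using G.algmap_mem c
  emb_mem r := by simpa using G.emb_mem r
  tp_mem := G.tm_mem
  tm_mem := by simpa using G.tp_mem
  mul_mem ha hb := by
    rw [neg_add]
    exact G.mul_mem ha hb
  decomp a := exists_sum_reindex (Equiv.neg ℤ) (G.decomp a)
  indep := forall_eq_zero_reindex (Equiv.neg ℤ) G.indep
  free_pos n a ha := G.free_neg n a ha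
  free_neg n a ha := G.free_pos n a (by simpa using ha)

def GradedMod.flip (Y : GradedMod G) : GradedMod G.flip where
  M := Y.M
  acg := Y.acg
  mod := Y.mod
  deg i := Y.deg (-i)
  smul_mem ha hm := by
    rw [neg_add]
    exact Y.smul_mem ha hm
  decomp m := exists_sum_reindex (Equiv.neg ℤ) (Y.decomp m)
  indep := forall_eq_zero_reindex (Equiv.neg ℤ) Y.indep

def GradedMod.unflip (Z : GradedMod G.flip) : GradedMod G where
  M := Z.M
  acg := Z.acg
  mod := Z.mod
  deg i := Z.deg (-i)
  smul_mem {i j a m} ha hm := by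
    rw [neg_add]
    exact Z.smul_mem (show a ∈ G.deg (- -i) by rwa [neg_neg]) hm
  decomp m := exists_sum_reindex (Equiv.neg ℤ) (Z.decomp m)
  indep := forall_eq_zero_reindex (Equiv.neg ℤ) Z.indep

theorem AnnihilatedByShifts.flip {lam : Ideal R} {Y : GradedMod G}
    (hY : AnnihilatedByShifts lam Y) : AnnihilatedByShifts lam Y.flip := fun i u hu m hm =>
  hY (-i) u (by rwa [← inv_zpow']) m hm

theorem IsSimpleGr.flip {Y : GradedMod G} (hY : IsSimpleGr Y) : IsSimpleGr Y.flip := by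
  refine ⟨hY.1, fun N hN => hY.2 N fun m hm => ?_⟩
  obtain ⟨s, g, hg, hgN, hm⟩ := hN m hm
  obtain ⟨s', g', hg', rfl⟩ := exists_sum_reindex (Equiv.neg ℤ)
    (p := fun i x => x ∈ Y.deg (-i) ∧ x ∈ N) ⟨s, g, fun i => ⟨hg i, hgN i⟩, hm⟩
  exact ⟨s', g', fun i => by simpa using (hg' i).1, fun i => (hg' i).2, rfl⟩

theorem IsIntervalZ.neg {s : Set ℤ} (hs : IsIntervalZ s) : IsIntervalZ {i | -i ∈ s} :=
  fun a ha b hb c hac hcb => hs (-b) hb (-a) ha (-c) (by omega) (by omega)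

def GExt1.unflip {S T : GradedMod G} (e : GExt1 S.flip T.flip) : GExt1 S T where
  E := e.E.unflip
  f := ⟨e.f.toLin, fun i m hm => by
    have h := e.f.map_deg (-i) m (show m ∈ T.deg (- -i) by rwa [neg_neg])
    show _ ∈ e.E.deg (-(i + 0))
    rwa [add_zero] at h ⊢⟩
  g := ⟨e.g.toLin, fun i m hm => by
    have h : e.g.toLin m ∈ S.deg (-(-i + 0)) := e.g.map_deg (-i) m hm
    rwa [add_zero, neg_neg, ← add_zero i] at h⟩
  inj := e.inj
  exact := e.exact
  surj := e.surj

theorem GExt1.not_split_unflip {S T : GradedMod G} {e : GExt1 S.flip T.flip} (he : ¬ e.Split) :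
    ¬ e.unflip.Split := fun ⟨sec, hsec⟩ =>
  he ⟨⟨sec.toLin, fun i m hm => by
    have h : sec.toLin m ∈ e.E.deg (-(-i + 0)) := sec.map_deg (-i) m hm
    rwa [add_zero, neg_neg, ← add_zero i] at h⟩, hsec⟩

theorem exists_not_split_of_forall_gt {lam : Ideal R} (hlam : lam.IsMaximal) {S T : GradedMod G}
    (hSa : AnnihilatedByShifts lam S) (hTa : AnnihilatedByShifts lam T) (hS : IsSimpleGr S)
    (hT : IsSimpleGr T) (hadj : IsIntervalZ (deltaSet S ∪ deltaSet T))
    (hgt : ∀ s ∈ deltaSet S, ∀ t ∈ deltaSet T, t < s) :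
    ∃ e : GExt1 S T, ¬ e.Split := by
  obtain ⟨e, he⟩ := exists_not_split_of_forall_lt hlam hSa.flip hTa.flip hS.flip hT.flip hadj.neg
    fun s hs t ht => neg_lt_neg_iff.1 (hgt _ hs _ ht)
  exact ⟨e.unflip, GExt1.not_split_unflip he⟩

theorem IsIntervalZ.forall_lt_or_forall_gt {s t : Set ℤ} (hs : IsIntervalZ s) (ht : IsIntervalZ t)
    (hst : s ∩ t = ∅) : (∀ a ∈ s, ∀ b ∈ t, a < b) ∨ (∀ a ∈ s, ∀ b ∈ t, b < a) := by
  by_contra! h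
  obtain ⟨⟨a₁, ha₁, b₁, hb₁, h₁⟩, ⟨a₂, ha₂, b₂, hb₂, h₂⟩⟩ := h
  have hne : ∀ x ∈ s, x ∉ t := fun x hx hxt => (Set.eq_empty_iff_forall_notMem.1 hst) x ⟨hx, hxt⟩
  rcases le_total a₂ b₁ with h | h
  · exact hne b₁ (hs a₂ ha₂ a₁ ha₁ b₁ h h₁) hb₁
  · exact hne a₂ ha₂ (ht b₁ hb₁ b₂ hb₂ a₂ h h₂)

theorem stmt8_general {R : Type} [CommRing R] [Algebra ℂ R]
    {σ : R ≃ₐ[ℂ] R} {v : R} (G : GWA R σ v)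
    (lam : Ideal R) (hlam : lam.IsMaximal)
    (X : GradedMod G) (hX : IsStdMod G lam X)
    (S T : GradedMod G)
    (hS : IsSubquotient X S ∧ IsSimpleGr S) (hT : IsSubquotient X T ∧ IsSimpleGr T)
    (hdisj : deltaSet S ∩ deltaSet T = ∅)
    (hadj : IsIntervalZ (deltaSet S ∪ deltaSet T)) :
    ∃ e : GExt1 S T, ¬ e.Split := by
  have hSa := hS.1.annihilatedByShifts hX.annihilatedByShifts
  have hTa := hT.1.annihilatedByShifts hX.annihilatedByShifts
  rcases hS.2.isIntervalZ.forall_lt_or_forall_gt hT.2.isIntervalZ hdisj with hlt | hgt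
  · exact exists_not_split_of_forall_lt hlam hSa hTa hS.2 hT.2 hadj hlt
  · exact exists_not_split_of_forall_gt hlam hSa hTa hS.2 hT.2 hadj hgt

/-- Adjacent simple graded subquotients `S, T` of `A^λ` (distinct, i.e. with
disjoint degree supports, whose union of degree supports is an interval) admit a nonsplit
graded extension, i.e. `Ext¹_gr(S,T) ≠ 0`. -/
theorem stmt8 {R : Type} [CommRing R] [Algebra ℂ R] (hfg : Algebra.FiniteType ℂ R)
    {σ : R ≃ₐ[ℂ] R} {v : R} (G : GWA R σ v)
    (lam : Ideal R) (hlam : lam.IsMaximal)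
    (X : GradedMod G) (hX : IsStdMod G lam X)
    (S T : GradedMod G)
    (hS : IsSubquotient X S ∧ IsSimpleGr S) (hT : IsSubquotient X T ∧ IsSimpleGr T)
    (hdisj : deltaSet S ∩ deltaSet T = ∅)
    (hadj : IsIntervalZ (deltaSet S ∪ deltaSet T)) :
    ∃ e : GExt1 S T, ¬ e.Split :=
  stmt8_general G lam hlam X hX S T hS hT hdisj hadj
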